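/- arXiv:2412.17403 — 3 statements merged into one kernel-verified Lean document; each statement's English description precedes it below -/
import Mathlib

section
/- If f ∈ S*_ρ with zf'(z)/f(z) = 1 + sinh^{-1}(w(z)), where w = (p-1)/(p+1) and p(z) = 1 + ∑ p_n z^n, then the Taylor coefficients of f satisfy a_2 = p_1/2, a_3 = p_2/4, and a_4 = (-p_1^3 - 6p_1 p_2 + 24p_3)/144. -/
/-!
Everything is read off from Taylor coefficients at `0`. Put `g = sinh⁻¹ ∘ w`. Since `f` has a
simple zero at `0`, the hypothesis gives `z f' = f (1 + g)` on a punctured disc, hence near `0` by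
continuity. Since `sinh ∘ sinh⁻¹ = id` on all of `ℂ`, the definition of `g` becomes the
division-free identity `(P + 1) sinh g = P - 1`. Leibniz's rule applied to the second identity at
orders 1, 2, 3 expresses `g'(0), g''(0), g'''(0)` through `p₁, p₂, p₃`; applied to the first at
orders 2, 3, 4 it expresses `f''(0) = 2a₂, f'''(0) = 6a₃, f⁽⁴⁾(0) = 24a₄` through those.
-/

open Filter Topology

/-- Principal complex inverse hyperbolic sine. -/
noncomputable def carcsinh (z : ℂ) : ℂ := Complex.log (z + (z ^ 2 + 1) ^ ((1 : ℂ) / 2))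

open Complex

section IteratedDeriv

variable {𝕜 : Type*} [NontriviallyNormedField 𝕜]

theorem hasFPowerSeriesAt_ofScalars_of_eventually_hasSum {a : ℕ → 𝕜} {f : 𝕜 → 𝕜}
    (hf : ∀ᶠ z in 𝓝 0, HasSum (fun n => a n * z ^ n) (f z)) :
    HasFPowerSeriesAt f (FormalMultilinearSeries.ofScalars 𝕜 a) 0 := by
  obtain ⟨ε, hε, hball⟩ := Metric.eventually_nhds_iff.mp hf
  obtain ⟨x, hx0, hxε⟩ := NormedField.exists_norm_lt 𝕜 hε
  have hterms := (hball (mem_ball_zero_iff.mpr hxε)).summable.tendsto_atTop_zero.norm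
  refine ⟨‖x‖₊, ?_, by simpa using hx0, fun {y} hy => ?_⟩
  · refine FormalMultilinearSeries.le_radius_of_tendsto _ (l := 0) ?_
    simpa [norm_mul, norm_pow] using hterms
  · rw [Metric.eball_coe, mem_ball_zero_iff] at hy
    simpa [FormalMultilinearSeries.ofScalars_apply_eq, mul_comm]
      using hball (mem_ball_zero_iff.mpr (hy.trans hxε))

variable [CompleteSpace 𝕜]

theorem HasFPowerSeriesAt.iteratedDeriv_eq_factorial_mul [CharZero 𝕜]
    {a : ℕ → 𝕜} {f : 𝕜 → 𝕜} {x : 𝕜}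
    (hf : HasFPowerSeriesAt f (FormalMultilinearSeries.ofScalars 𝕜 a) x) (n : ℕ) :
    iteratedDeriv n f x = n.factorial * a n := by
  have := congrFun ((FormalMultilinearSeries.ofScalars_series_injective 𝕜 𝕜)
    (hf.analyticAt.hasFPowerSeriesAt.eq_formalMultilinearSeries hf)) n
  rw [← this, mul_div_cancel₀]
  exact_mod_cast n.factorial_ne_zero

theorem iteratedDeriv_id_mul_deriv_zero {h : 𝕜 → 𝕜} (hh : AnalyticAt 𝕜 h 0) (n : ℕ) :
    iteratedDeriv n (fun z => z * deriv h z) 0 = n * iteratedDeriv n h 0 := by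
  rw [iteratedDeriv_fun_mul (f := fun z => z) contDiffAt_id hh.deriv.contDiffAt,
    Finset.sum_eq_single 1 (fun i _ hi => by simp [iteratedDeriv_fun_id_zero, hi])
      (fun h1 => by simp_all)]
  rcases n with _ | n
  · simp
  · simp [← iteratedDeriv_succ']

theorem id_mul_deriv_eventuallyEq_of_nhdsNE {f k : 𝕜 → 𝕜} (hf : AnalyticAt 𝕜 f 0)
    (hf' : deriv f 0 ≠ 0) (hk : ContinuousAt k 0)
    (h : ∀ᶠ z in 𝓝[≠] 0, z * deriv f z / f z = k z) :
    (fun z => z * deriv f z) =ᶠ[𝓝 0] fun z => f z * k z := by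
  have hne : ∀ᶠ z in 𝓝[≠] 0, f z ≠ 0 :=
    hf.eventually_eq_zero_or_eventually_ne_zero.resolve_left
      fun h0 => hf' (by simpa using Filter.EventuallyEq.deriv_eq (f := fun _ => 0) h0)
  refine ((continuousAt_id.mul hf.deriv.continuousAt).eventuallyEq_nhds_iff_eventuallyEq_nhdsNE
    (hf.continuousAt.mul hk)).mp ?_
  filter_upwards [h, hne] with z hz hfz
  simp only [Pi.mul_apply, id, ← hz, mul_div_cancel₀ _ hfz]

theorem iteratedDeriv_of_id_mul_deriv_eq [CharZero 𝕜] {f g : 𝕜 → 𝕜}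
    (hf : AnalyticAt 𝕜 f 0) (hg : AnalyticAt 𝕜 g 0) (hf0 : f 0 = 0) (hf1 : deriv f 0 = 1)
    (hg0 : g 0 = 0) (h : (fun z => z * deriv f z) =ᶠ[𝓝 0] fun z => f z * (1 + g z)) :
    iteratedDeriv 2 f 0 = 2 * deriv g 0 ∧
    iteratedDeriv 3 f 0 = 3 / 2 * iteratedDeriv 2 g 0 + 3 * deriv g 0 ^ 2 ∧
    iteratedDeriv 4 f 0 = 4 / 3 * iteratedDeriv 3 g 0 + 6 * deriv g 0 * iteratedDeriv 2 g 0
      + 4 * deriv g 0 ^ 3 := by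
  have hcoeff (n : ℕ) := (h.iteratedDeriv_eq n).symm.trans (iteratedDeriv_id_mul_deriv_zero hf n)
  have e2 := hcoeff 2
  have e3 := hcoeff 3
  have e4 := hcoeff 4
  rw [iteratedDeriv_fun_mul hf.contDiffAt (analyticAt_const.fun_add hg).contDiffAt] at e2 e3 e4
  simp [Finset.sum_range_succ, iteratedDeriv_const_add, hf0, hf1, hg0, Nat.choose] at e2 e3 e4
  have d2 : iteratedDeriv 2 f 0 = 2 * deriv g 0 := by linear_combination -e2
  have d3 : iteratedDeriv 3 f 0 = 3 / 2 * iteratedDeriv 2 g 0 + 3 * deriv g 0 ^ 2 := by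
    linear_combination -e3 / 2 + 3 / 2 * deriv g 0 * d2
  refine ⟨d2, d3, ?_⟩
  linear_combination -e4 / 3 + 2 * iteratedDeriv 2 g 0 * d2 + 4 / 3 * deriv g 0 * d3

end IteratedDeriv

section Sinh

variable {g : ℂ → ℂ} {x : ℂ}

theorem iteratedDeriv_succ_sinh_comp (hg : AnalyticAt ℂ g x) (n : ℕ) :
    iteratedDeriv (n + 1) (fun z => sinh (g z)) x =
      iteratedDeriv n (fun z => cosh (g z) * deriv g z) x := by
  rw [iteratedDeriv_succ']
  refine Filter.EventuallyEq.iteratedDeriv_eq n ?_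
  filter_upwards [hg.eventually_analyticAt] with z hz using deriv_csinh hz.differentiableAt

theorem iteratedDeriv_succ_cosh_comp (hg : AnalyticAt ℂ g x) (n : ℕ) :
    iteratedDeriv (n + 1) (fun z => cosh (g z)) x =
      iteratedDeriv n (fun z => sinh (g z) * deriv g z) x := by
  rw [iteratedDeriv_succ']
  refine Filter.EventuallyEq.iteratedDeriv_eq n ?_
  filter_upwards [hg.eventually_analyticAt] with z hz using deriv_ccosh hz.differentiableAt

theorem iteratedDeriv_sinh_comp (hg : AnalyticAt ℂ g x) :
    deriv (fun z => sinh (g z)) x = cosh (g x) * deriv g x ∧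
    iteratedDeriv 2 (fun z => sinh (g z)) x =
      sinh (g x) * deriv g x ^ 2 + cosh (g x) * iteratedDeriv 2 g x ∧
    iteratedDeriv 3 (fun z => sinh (g z)) x =
      cosh (g x) * deriv g x ^ 3 + 3 * sinh (g x) * deriv g x * iteratedDeriv 2 g x
        + cosh (g x) * iteratedDeriv 3 g x := by
  have hsinh : AnalyticAt ℂ (fun z => sinh (g z)) x := analyticAt_sinh.comp hg
  have hcosh : AnalyticAt ℂ (fun z => cosh (g z)) x := analyticAt_cosh.comp hg
  have s1 := iteratedDeriv_succ_sinh_comp hg 0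
  have s2 := iteratedDeriv_succ_sinh_comp hg 1
  have s3 := iteratedDeriv_succ_sinh_comp hg 2
  have c1 := iteratedDeriv_succ_cosh_comp hg 0
  have c2 := iteratedDeriv_succ_cosh_comp hg 1
  rw [iteratedDeriv_fun_mul hcosh.contDiffAt hg.deriv.contDiffAt] at s1 s2 s3
  rw [iteratedDeriv_fun_mul hsinh.contDiffAt hg.deriv.contDiffAt] at c1 c2
  simp only [Finset.sum_range_succ, Finset.sum_range_zero] at s1 s2 s3 c1 c2
  simp [← iteratedDeriv_succ'] at s1 s2 s3 c1 c2
  refine ⟨s1, by rw [s2, c1]; ring, by rw [s3, c1, c2, s1]; ring⟩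

theorem iteratedDeriv_of_mul_sinh_comp_eq {P : ℂ → ℂ} (hP : AnalyticAt ℂ P 0)
    (hg : AnalyticAt ℂ g 0) (hP0 : P 0 = 1) (hg0 : g 0 = 0)
    (h : (fun z => (P z + 1) * sinh (g z)) =ᶠ[𝓝 0] fun z => P z - 1) :
    deriv g 0 = deriv P 0 / 2 ∧
    iteratedDeriv 2 g 0 = (iteratedDeriv 2 P 0 - deriv P 0 ^ 2) / 2 ∧
    iteratedDeriv 3 g 0 = iteratedDeriv 3 P 0 / 2 - 3 / 2 * deriv P 0 * iteratedDeriv 2 P 0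
      + 5 / 8 * deriv P 0 ^ 3 := by
  have e1 := h.iteratedDeriv_eq 1
  have e2 := h.iteratedDeriv_eq 2
  have e3 := h.iteratedDeriv_eq 3
  have hsinh : AnalyticAt ℂ (fun z => sinh (g z)) 0 := analyticAt_sinh.comp hg
  rw [iteratedDeriv_fun_mul (hP.fun_add analyticAt_const).contDiffAt hsinh.contDiffAt] at e1 e2 e3
  obtain ⟨s1, s2, s3⟩ := iteratedDeriv_sinh_comp hg
  simp only [Finset.sum_range_succ, Finset.sum_range_zero] at e1 e2 e3
  simp [iteratedDeriv_fun_add hP.contDiffAt contDiffAt_const,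
    iteratedDeriv_fun_sub hP.contDiffAt contDiffAt_const, iteratedDeriv_const, hP0,
    hg0, s1, s2, s3] at e1 e2 e3
  have d1 : deriv g 0 = deriv P 0 / 2 := by linear_combination e1 / 2
  have d2 : iteratedDeriv 2 g 0 = (iteratedDeriv 2 P 0 - deriv P 0 ^ 2) / 2 := by
    rw [d1] at e2
    linear_combination e2 / 2
  refine ⟨d1, d2, ?_⟩
  rw [d1, d2] at e3
  linear_combination e3 / 2

end Sinh

theorem sinh_carcsinh (u : ℂ) : sinh (carcsinh u) = u := by
  set s := (u ^ 2 + 1) ^ ((1 : ℂ) / 2)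
  have hs : s ^ 2 = u ^ 2 + 1 := by simp [s]
  have hv : u + s ≠ 0 := fun h => by
    have : s = -u := by linear_combination h
    simp [this] at hs
  rw [carcsinh, sinh, exp_log hv, exp_neg, exp_log hv]
  field_simp
  linear_combination hs

theorem analyticAt_carcsinh_zero : AnalyticAt ℂ carcsinh 0 := by
  refine (analyticAt_id.add ?_).clog (by norm_num [mem_slitPlane_iff, carcsinh])
  exact ((analyticAt_id.pow 2).add analyticAt_const).cpow analyticAt_const
    (by norm_num [mem_slitPlane_iff])

theorem carcsinh_zero : carcsinh 0 = 0 := by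
  simp [carcsinh]

theorem coeff_relations_S_rho_general
    (f P : ℂ → ℂ) (a p : ℕ → ℂ)
    (ha0 : a 0 = 0) (ha1 : a 1 = 1) (hp0 : p 0 = 1)
    (hf : ∀ᶠ z in 𝓝 (0 : ℂ), HasSum (fun n : ℕ => a n * z ^ n) (f z))
    (hP : ∀ᶠ z in 𝓝 (0 : ℂ), HasSum (fun n : ℕ => p n * z ^ n) (P z))
    (hsub : ∀ᶠ z in 𝓝[≠] (0 : ℂ),
      z * deriv f z / f z = 1 + carcsinh ((P z - 1) / (P z + 1))) :
    a 2 = p 1 / 2 ∧ a 3 = p 2 / 4 ∧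
      a 4 = (-(p 1) ^ 3 - 6 * p 1 * p 2 + 24 * p 3) / 144 := by
  have hfs := hasFPowerSeriesAt_ofScalars_of_eventually_hasSum hf
  have hPs := hasFPowerSeriesAt_ofScalars_of_eventually_hasSum hP
  have hfa := hfs.analyticAt
  have hPa := hPs.analyticAt
  have hf_iter (n : ℕ) := hfs.iteratedDeriv_eq_factorial_mul n
  have hP_iter (n : ℕ) := hPs.iteratedDeriv_eq_factorial_mul n
  have hP0 : P 0 = 1 := by simpa [hp0] using hP_iter 0
  have hf1 : deriv f 0 = 1 := by simpa [ha1] using hf_iter 1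
  set g := fun z => carcsinh ((P z - 1) / (P z + 1))
  have hg : AnalyticAt ℂ g 0 :=
    analyticAt_carcsinh_zero.comp_of_eq ((hPa.sub analyticAt_const).div
      (hPa.add analyticAt_const) (by simp [hP0])) (by simp [hP0])
  have hg0 : g 0 = 0 := by simp [g, hP0, carcsinh_zero]
  have hg_eqn : (fun z => (P z + 1) * sinh (g z)) =ᶠ[𝓝 0] fun z => P z - 1 := by
    have hP_ne : ∀ᶠ z in 𝓝 0, P z + 1 ≠ 0 :=
      (hPa.continuousAt.add continuousAt_const).eventually_ne (by simp [hP0])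
    filter_upwards [hP_ne] with z hz
    rw [sinh_carcsinh, mul_div_cancel₀ _ hz]
  have hf_eqn := id_mul_deriv_eventuallyEq_of_nhdsNE hfa (by simp [hf1])
    (continuousAt_const.add hg.continuousAt) hsub
  obtain ⟨g1, g2, g3⟩ := iteratedDeriv_of_mul_sinh_comp_eq hPa hg hP0 hg0 hg_eqn
  obtain ⟨f2, f3, f4⟩ := iteratedDeriv_of_id_mul_deriv_eq hfa hg
    (by simpa [ha0] using hf_iter 0) hf1 hg0 hf_eqn
  have hP1 : deriv P 0 = p 1 := by simpa using hP_iter 1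
  simp only [hP_iter, hP1] at g1 g2 g3
  simp only [hf_iter, g1, g2, g3] at f2 f3 f4
  norm_num [Nat.factorial] at f2 f3 f4
  exact ⟨f2, by linear_combination f3 / 6, by linear_combination f4 / 24⟩

/-- For `f ∈ S*_ρ` with `zf'(z)/f(z) = 1 + sinh⁻¹(w(z))`, `w = (p-1)/(p+1)`,
the Taylor coefficients satisfy `a₂ = p₁/2`, `a₃ = p₂/4`,
`a₄ = (-p₁³ - 6p₁p₂ + 24p₃)/144`. -/
theorem coeff_relations_S_rho
    (f P : ℂ → ℂ) (a p : ℕ → ℂ)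
    (ha0 : a 0 = 0) (ha1 : a 1 = 1) (hp0 : p 0 = 1)
    (hf : ∀ᶠ z in 𝓝 (0 : ℂ), HasSum (fun n : ℕ => a n * z ^ n) (f z))
    (hP : ∀ᶠ z in 𝓝 (0 : ℂ), HasSum (fun n : ℕ => p n * z ^ n) (P z))
    (hPre : ∀ z ∈ Metric.ball (0 : ℂ) 1, 0 < (P z).re)
    (hsub : ∀ᶠ z in 𝓝[≠] (0 : ℂ),
      z * deriv f z / f z = 1 + carcsinh ((P z - 1) / (P z + 1))) :
    a 2 = p 1 / 2 ∧ a 3 = p 2 / 4 ∧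
      a 4 = (-(p 1) ^ 3 - 6 * p 1 * p 2 + 24 * p 3) / 144 :=
  coeff_relations_S_rho_general f P a p ha0 ha1 hp0 hf hP hsub
end

section
/- For real ζ_1 ∈ (0,1), with A = 4ζ_1^3/(3(1-ζ_1^2)), B = -3ζ_1/2, C = -(3+ζ_1^2)/(4ζ_1), the inequality |AB| ≤ |C|(|B| - 4|A|) holds if and only if 0 < ζ_1 ≤ ζ' where ζ' = sqrt((-57 + 6√157)/89); equivalently 27 - 114ζ_1^2 - 89ζ_1^4 ≥ 0 iff ζ_1 ≤ ζ'. -/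
/-- For `ζ₁ ∈ (0,1)` with `A,B,C` as stated, `|AB| ≤ |C|(|B| - 4|A|)` iff
`ζ₁ ≤ ζ' = √((-57 + 6√157)/89)`; equivalently `27 - 114ζ₁² - 89ζ₁⁴ ≥ 0` iff `ζ₁ ≤ ζ'`. -/
theorem T6_iff (ζ1 : ℝ) (h0 : 0 < ζ1) (h1 : ζ1 < 1)
    (A B C : ℝ)
    (hA : A = 4 * ζ1 ^ 3 / (3 * (1 - ζ1 ^ 2)))
    (hB : B = -3 * ζ1 / 2)
    (hC : C = -(3 + ζ1 ^ 2) / (4 * ζ1))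
    (ζ' : ℝ) (hζ' : ζ' = Real.sqrt ((-57 + 6 * Real.sqrt 157) / 89)) :
    (|A * B| ≤ |C| * (|B| - 4 * |A|) ↔ ζ1 ≤ ζ') ∧
      (27 - 114 * ζ1 ^ 2 - 89 * ζ1 ^ 4 ≥ 0 ↔ ζ1 ≤ ζ') := by
  have h2 : (0:ℝ) < 1 - ζ1 ^ 2 := by nlinarith
  have hs0 : (0:ℝ) ≤ Real.sqrt 157 := Real.sqrt_nonneg _
  have hs : (Real.sqrt 157) ^ 2 = 157 := Real.sq_sqrt (by norm_num)
  set s := Real.sqrt 157 with hsdef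
  have hr0 : (0:ℝ) ≤ (-57 + 6 * s) / 89 := by nlinarith [sq_nonneg (s - 13)]
  -- second iff
  have key : 27 - 114 * ζ1 ^ 2 - 89 * ζ1 ^ 4 ≥ 0 ↔ ζ1 ≤ ζ' := by
    rw [hζ', show ζ1 ≤ Real.sqrt ((-57 + 6 * s) / 89) ↔ ζ1 ^ 2 ≤ (-57 + 6 * s) / 89 from
      (Real.le_sqrt h0.le hr0)]
    constructor
    · intro h
      rw [le_div_iff₀ (by norm_num)]
      nlinarith [sq_nonneg (89 * ζ1 ^ 2 + 57 - 6 * s), sq_nonneg ζ1]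
    · intro h
      rw [le_div_iff₀ (by norm_num)] at h
      nlinarith [sq_nonneg (89 * ζ1 ^ 2 + 57 - 6 * s), sq_nonneg ζ1, mul_pos h0 h0]
  refine ⟨?_, key⟩
  rw [← key]
  -- compute absolute values
  have hApos : 0 < A := by
    rw [hA]; exact div_pos (by positivity) (by linarith)
  have hBneg : B < 0 := by rw [hB]; nlinarith
  have hCneg : C < 0 := by
    rw [hC]
    apply div_neg_of_neg_of_pos
    · nlinarith
    · linarith
  rw [abs_mul, abs_of_pos hApos, abs_of_neg hBneg, abs_of_neg hCneg, hB, hC]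
  have keyeq : (-(-(3 + ζ1 ^ 2) / (4 * ζ1))) * (-(-3 * ζ1 / 2) - 4 * A)
      - A * (-(-3 * ζ1 / 2))
      = (27 - 114 * ζ1 ^ 2 - 89 * ζ1 ^ 4) / (24 * (1 - ζ1 ^ 2)) := by
    rw [hA]; field_simp; ring
  constructor
  · intro h
    have h3 : 0 ≤ (27 - 114 * ζ1 ^ 2 - 89 * ζ1 ^ 4) / (24 * (1 - ζ1 ^ 2)) := by
      rw [← keyeq]; linarith
    have := (div_nonneg_iff.mp h3)
    rcases this with ⟨hn, _⟩ | ⟨_, hd⟩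
    · linarith
    · nlinarith
  · intro h
    have h3 : 0 ≤ (27 - 114 * ζ1 ^ 2 - 89 * ζ1 ^ 4) / (24 * (1 - ζ1 ^ 2)) :=
      div_nonneg (by linarith) (by linarith)
    rw [← keyeq] at h3; linarith
end

section
/- If p_2 = (p_1^2 + (4 - p_1^2)ζ)/2 for complex numbers p_1, ζ, then (1/256)(-p_1^4 - 4p_2^2 + 4p_1^2(4 + p_2)) = (1/256)(-p_1^4 ζ^2 - 16ζ^2 + 16p_1^2 + 8p_1^2 ζ^2), and if |p_1| ≤ 2 and |ζ| ≤ 1 its modulus is at most (1/256)(|p_1|^4 + 24|p_1|^2 + 16) ≤ 1/2. -/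
/-!
Substituting `2 p₂ = p₁² + (4 - p₁²) ζ` collapses the Toeplitz expression to
`16 p₁² - ζ² (p₁² - 4)²`, so by the triangle inequality and `‖ζ‖ ≤ 1` its modulus is at most
`16 ‖p₁‖² + (‖p₁‖² + 4)² = ‖p₁‖⁴ + 24 ‖p₁‖² + 16`, which is increasing in `‖p₁‖` and equals
`128` at `‖p₁‖ = 2`.
-/

theorem toeplitz_expr_eq_of_two_mul_eq {R : Type*} [CommRing R] {p1 p2 ζ : R}
    (h : 2 * p2 = p1 ^ 2 + (4 - p1 ^ 2) * ζ) :
    -p1 ^ 4 - 4 * p2 ^ 2 + 4 * p1 ^ 2 * (4 + p2) =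
      -p1 ^ 4 * ζ ^ 2 - 16 * ζ ^ 2 + 16 * p1 ^ 2 + 8 * p1 ^ 2 * ζ ^ 2 := by
  linear_combination (2 * p1 ^ 2 - 2 * p2 - p1 ^ 2 - (4 - p1 ^ 2) * ζ) * h

theorem norm_toeplitz_expr_le {𝕜 : Type*} [RCLike 𝕜] (p ζ : 𝕜) (hζ : ‖ζ‖ ≤ 1) :
    ‖-p ^ 4 * ζ ^ 2 - 16 * ζ ^ 2 + 16 * p ^ 2 + 8 * p ^ 2 * ζ ^ 2‖ ≤
      ‖p‖ ^ 4 + 24 * ‖p‖ ^ 2 + 16 := by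
  have hζ2 : ‖ζ‖ ^ 2 ≤ 1 := pow_le_one₀ (norm_nonneg ζ) hζ
  have hsub : ‖p ^ 2 - 4‖ ≤ ‖p‖ ^ 2 + 4 := by
    have := norm_sub_le (p ^ 2) (4 : 𝕜)
    rwa [norm_pow, RCLike.norm_ofNat] at this
  calc ‖-p ^ 4 * ζ ^ 2 - 16 * ζ ^ 2 + 16 * p ^ 2 + 8 * p ^ 2 * ζ ^ 2‖
      = ‖16 * p ^ 2 - ζ ^ 2 * (p ^ 2 - 4) ^ 2‖ := by ring_nf
    _ ≤ 16 * ‖p‖ ^ 2 + ‖ζ‖ ^ 2 * ‖p ^ 2 - 4‖ ^ 2 := by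
      have := norm_sub_le (16 * p ^ 2) (ζ ^ 2 * (p ^ 2 - 4) ^ 2)
      rwa [norm_mul, norm_mul, norm_pow, norm_pow, norm_pow, RCLike.norm_ofNat] at this
    _ ≤ 16 * ‖p‖ ^ 2 + 1 * (‖p‖ ^ 2 + 4) ^ 2 := by gcongr
    _ = ‖p‖ ^ 4 + 24 * ‖p‖ ^ 2 + 16 := by ring

/-- With `p₂ = (p₁² + (4 - p₁²)ζ)/2`, the Toeplitz expression transforms as stated,
and for `|p₁| ≤ 2`, `|ζ| ≤ 1` its modulus is at most
`(1/256)(|p₁|⁴ + 24|p₁|² + 16) ≤ 1/2`. -/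
theorem toeplitz_substitution (p1 p2 ζ : ℂ)
    (hp2 : p2 = (p1 ^ 2 + (4 - p1 ^ 2) * ζ) / 2)
    (hp1 : ‖p1‖ ≤ 2) (hζ : ‖ζ‖ ≤ 1) :
    (1 / 256 : ℂ) * (-p1 ^ 4 - 4 * p2 ^ 2 + 4 * p1 ^ 2 * (4 + p2)) =
        (1 / 256 : ℂ) * (-p1 ^ 4 * ζ ^ 2 - 16 * ζ ^ 2 + 16 * p1 ^ 2 + 8 * p1 ^ 2 * ζ ^ 2) ∧
      ‖(1 / 256 : ℂ) * (-p1 ^ 4 - 4 * p2 ^ 2 + 4 * p1 ^ 2 * (4 + p2))‖ ≤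
        (1 / 256) * (‖p1‖ ^ 4 + 24 * ‖p1‖ ^ 2 + 16) ∧
      (1 / 256) * (‖p1‖ ^ 4 + 24 * ‖p1‖ ^ 2 + 16) ≤ 1 / 2 := by
  have hid := toeplitz_expr_eq_of_two_mul_eq (p1 := p1) (p2 := p2) (ζ := ζ) (by rw [hp2]; ring)
  refine ⟨by rw [hid], ?_, ?_⟩
  · rw [hid, norm_mul, show ‖(1 / 256 : ℂ)‖ = 1 / 256 by norm_num]
    gcongr
    exact norm_toeplitz_expr_le p1 ζ hζ
  · have h4 : ‖p1‖ ^ 4 ≤ 2 ^ 4 := pow_le_pow_left₀ (norm_nonneg p1) hp1 4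
    have h2 : ‖p1‖ ^ 2 ≤ 2 ^ 2 := pow_le_pow_left₀ (norm_nonneg p1) hp1 2
    linarith
end
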